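/- For a Euclidean triangle with side lengths l₁, l₂, l₃ and opposite angles a₁, a₂, a₃, the 1-form w = Σᵢ (a_i/l_i) dl_i is closed on the open set of triples satisfying the strict triangle inequalities, i.e., ∂(a_i/l_i)/∂l_j = ∂(a_j/l_j)/∂l_i for all i,j. -/

import Mathlib

open Real

/-!
Differentiating the law of cosines gives, for `i ≠ j` and `k` the third index,
`∂aᵢ/∂lⱼ = -(lᵢ² + lⱼ² - lₖ²) / (lⱼ √P)`, where `P` is Heron's product (`16 · area²`).
Hence `∂(aᵢ/lᵢ)/∂lⱼ = -(lᵢ² + lⱼ² - lₖ²) / (lᵢ lⱼ √P)`, which is symmetric in `i` and `j`.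
-/

/-- The angle opposite the side of length `a` in a Euclidean triangle with side
lengths `a`, `b`, `c` (symmetric in `b`, `c`). -/
noncomputable def triAngle (a b c : ℝ) : ℝ :=
  Real.arccos ((b ^ 2 + c ^ 2 - a ^ 2) / (2 * b * c))

lemma triAngle_comm (a b c : ℝ) : triAngle a b c = triAngle a c b := by
  unfold triAngle
  ring_nf

noncomputable def cosRule (a b c : ℝ) : ℝ := (b ^ 2 + c ^ 2 - a ^ 2) / (2 * b * c)

def heronProduct (a b c : ℝ) : ℝ := (a + b + c) * (-a + b + c) * (a - b + c) * (a + b - c)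

lemma heronProduct_swap (a b c : ℝ) : heronProduct b a c = heronProduct a b c := by
  unfold heronProduct
  ring

lemma heronProduct_pos {a b c : ℝ} (ha : a < b + c) (hb : b < a + c) (hc : c < a + b) :
    0 < heronProduct a b c := by
  unfold heronProduct
  have : 0 < a + b + c := by linarith
  apply_rules [mul_pos] <;> linarith

lemma one_sub_cosRule_sq {a b c : ℝ} (hb : b ≠ 0) (hc : c ≠ 0) :
    1 - cosRule a b c ^ 2 = heronProduct a b c / (2 * b * c) ^ 2 := by
  unfold cosRule heronProduct
  field_simp
  ring

lemma hasDerivAt_cosRule {a b c : ℝ} (hb : b ≠ 0) (hc : c ≠ 0) :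
    HasDerivAt (fun t => cosRule a t c) ((a ^ 2 + b ^ 2 - c ^ 2) / (2 * b ^ 2 * c)) b := by
  have hnum : HasDerivAt (fun t => t ^ 2 + c ^ 2 - a ^ 2) (2 * b) b := by
    simpa using ((hasDerivAt_pow 2 b).add_const (c ^ 2)).sub_const (a ^ 2)
  have hden : HasDerivAt (fun t => 2 * t * c) (2 * c) b := by
    simpa using ((hasDerivAt_id b).const_mul 2).mul_const c
  refine (hnum.div hden (by positivity)).congr_deriv ?_
  field_simp
  ring

lemma hasDerivAt_triAngle {a b c : ℝ} (ha : a < b + c) (hb : b < a + c) (hc : c < a + b) :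
    HasDerivAt (fun t => triAngle a t c)
      (-((a ^ 2 + b ^ 2 - c ^ 2) / (b * √(heronProduct a b c)))) b := by
  have hb0 : 0 < b := by linarith
  have hc0 : 0 < c := by linarith
  have hP := heronProduct_pos ha hb hc
  have hcos := one_sub_cosRule_sq (a := a) hb0.ne' hc0.ne'
  have hsq : cosRule a b c ^ 2 < 1 := by
    have : 0 < heronProduct a b c / (2 * b * c) ^ 2 := by positivity
    linarith
  obtain ⟨hlo, hhi⟩ := abs_lt.mp ((sq_lt_one_iff_abs_lt_one _).mp hsq)
  have hsqrt : √(1 - cosRule a b c ^ 2) = √(heronProduct a b c) / (2 * b * c) := by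
    rw [hcos, sqrt_div hP.le, sqrt_sq (by positivity)]
  refine ((hasDerivAt_arccos hlo.ne' hhi.ne).comp b
    (hasDerivAt_cosRule hb0.ne' hc0.ne')).congr_deriv ?_
  have : 0 < √(heronProduct a b c) := sqrt_pos.mpr hP
  rw [hsqrt]
  field_simp

lemma deriv_triAngle_div_comm {a b c : ℝ} (ha : a < b + c) (hb : b < a + c) (hc : c < a + b) :
    deriv (fun t => triAngle a t c / a) b = deriv (fun t => triAngle b t c / b) a := by
  rw [deriv_div_const, deriv_div_const, (hasDerivAt_triAngle ha hb hc).deriv,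
    (hasDerivAt_triAngle hb ha (by linarith)).deriv, heronProduct_swap]
  ring

theorem rivin_one_form_closed_general (l1 l2 l3 : ℝ)
    (t1 : l1 < l2 + l3) (t2 : l2 < l1 + l3) (t3 : l3 < l1 + l2) :
    deriv (fun t => triAngle l1 t l3 / l1) l2 = deriv (fun t => triAngle l2 t l3 / l2) l1 ∧
    deriv (fun t => triAngle l1 l2 t / l1) l3 = deriv (fun t => triAngle l3 l2 t / l3) l1 ∧
    deriv (fun t => triAngle l2 l1 t / l2) l3 = deriv (fun t => triAngle l3 l1 t / l3) l2 := by
  simp only [triAngle_comm l1 l2, triAngle_comm l3 l2, triAngle_comm l2 l1, triAngle_comm l3 l1]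
  exact ⟨deriv_triAngle_div_comm t1 t2 t3,
    deriv_triAngle_div_comm (by linarith) (by linarith) (by linarith),
    deriv_triAngle_div_comm (by linarith) (by linarith) (by linarith)⟩

/-- Rivin's 1-form `w = Σᵢ (aᵢ/lᵢ) dlᵢ` on Euclidean triangles is closed:
the mixed partials agree, `∂(aᵢ/lᵢ)/∂l_j = ∂(a_j/l_j)/∂lᵢ`. -/
theorem rivin_one_form_closed (l1 l2 l3 : ℝ)
    (h1 : 0 < l1) (h2 : 0 < l2) (h3 : 0 < l3)
    (t1 : l1 < l2 + l3) (t2 : l2 < l1 + l3) (t3 : l3 < l1 + l2) :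
    deriv (fun t => triAngle l1 t l3 / l1) l2 = deriv (fun t => triAngle l2 t l3 / l2) l1 ∧
    deriv (fun t => triAngle l1 l2 t / l1) l3 = deriv (fun t => triAngle l3 l2 t / l3) l1 ∧
    deriv (fun t => triAngle l2 l1 t / l2) l3 = deriv (fun t => triAngle l3 l1 t / l3) l2 :=
  rivin_one_form_closed_general l1 l2 l3 t1 t2 t3
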